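/- Let b ≥ 0, η be a Schwartz function on ℝ, and (a_ξ)_{ξ∈Z\{0\}} a real sequence with |a_ξ| ≤ A for all ξ. Let f ∈ L²(T) with f̂(0)=0 and define u(t,x) with space-time Fourier transform ũ(τ,ξ) = f̂(ξ) η̂(τ − a_ξ − ξ³). Then ‖⟨τ−ξ³⟩^b ũ(τ,ξ)‖_{L²_τ ℓ²_ξ} ≤ C(b) ‖⟨τ⟩^b η̂(τ)‖_{L²_τ} (1+A)^b ‖f‖_{L²}, where ⟨x⟩ = 1+|x|. -/

import Mathlib

noncomputable def jap (x : ℝ) : ℝ := 1 + |x|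

noncomputable def Hnorm (σ : ℝ) (a : ℤ → ℂ) : ℝ :=
  Real.sqrt (∑' ξ : ℤ, jap (ξ : ℝ) ^ (2 * σ) * ‖a ξ‖ ^ 2)

/-! Peetre's inequality `⟨x + y⟩ ≤ ⟨x⟩⟨y⟩` gives `⟨τ - ξ³⟩^{2b} ≤ ⟨a_ξ⟩^{2b} ⟨τ - a_ξ - ξ³⟩^{2b}`, and
`⟨a_ξ⟩ ≤ 1 + A`. After this, the `τ`-integral at frequency `ξ` is a translate of the weighted
`L²` norm of `η̂`, which is finite because `η̂` is a Schwartz function. Summing over `ξ` then gives the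
bound with `C = 1`. -/

open MeasureTheory

lemma one_le_jap (x : ℝ) : 1 ≤ jap x :=
  le_add_of_nonneg_right (abs_nonneg x)

lemma jap_pos (x : ℝ) : 0 < jap x :=
  one_pos.trans_le (one_le_jap x)

lemma continuous_jap : Continuous jap :=
  continuous_const.add continuous_abs

lemma jap_add_le (x y : ℝ) : jap (x + y) ≤ jap x * jap y := by
  unfold jap
  nlinarith [abs_add_le x y, abs_nonneg x, abs_nonneg y, mul_nonneg (abs_nonneg x) (abs_nonneg y)]

lemma jap_rpow_add_le {s : ℝ} (hs : 0 ≤ s) (x y : ℝ) :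
    jap (x + y) ^ s ≤ jap x ^ s * jap y ^ s := by
  rw [← Real.mul_rpow (jap_pos x).le (jap_pos y).le]
  exact Real.rpow_le_rpow (jap_pos _).le (jap_add_le x y) hs

lemma jap_rpow_le_of_le_natCast {c : ℝ} {n : ℕ} (hcn : c ≤ n) (x : ℝ) :
    jap x ^ c ≤ 2 ^ (n - 1) * (1 + ‖x‖ ^ n) :=
  calc jap x ^ c ≤ jap x ^ (n : ℝ) := Real.rpow_le_rpow_of_exponent_le (one_le_jap x) hcn
    _ = (1 + |x|) ^ n := Real.rpow_natCast _ n
    _ ≤ 2 ^ (n - 1) * (1 ^ n + |x| ^ n) := add_pow_le zero_le_one (abs_nonneg x) n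
    _ = 2 ^ (n - 1) * (1 + ‖x‖ ^ n) := by rw [one_pow, Real.norm_eq_abs]

namespace SchwartzMap

variable {V : Type*} [NormedAddCommGroup V] [NormedSpace ℝ V]

lemma integrable_jap_rpow_mul_norm (g : 𝓢(ℝ, V)) (c : ℝ) :
    Integrable (fun τ : ℝ => jap τ ^ c * ‖g τ‖) := by
  obtain ⟨n, hn⟩ := exists_nat_ge c
  have hmajorant : Integrable (fun τ : ℝ => 2 ^ (n - 1) * (‖g τ‖ + ‖τ‖ ^ n * ‖g τ‖)) :=
    (g.integrable.norm.add (g.integrable_pow_mul volume n)).const_mul _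
  refine hmajorant.mono' ?_ (ae_of_all _ fun τ => ?_)
  · exact ((continuous_jap.rpow_const fun τ => Or.inl (jap_pos τ).ne').mul
      g.continuous.norm).aestronglyMeasurable
  · rw [Real.norm_of_nonneg (by have := jap_pos τ; positivity), ← one_add_mul, ← mul_assoc]
    exact mul_le_mul_of_nonneg_right (jap_rpow_le_of_le_natCast hn τ) (norm_nonneg _)

lemma integrable_jap_rpow_mul_norm_sq (g : 𝓢(ℝ, V)) (c : ℝ) :
    Integrable (fun τ : ℝ => jap τ ^ c * ‖g τ‖ ^ 2) := by
  refine ((g.integrable_jap_rpow_mul_norm c).bdd_mul (c := SchwartzMap.seminorm ℝ 0 0 g)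
    g.continuous.norm.aestronglyMeasurable (ae_of_all _ fun τ => ?_)).congr
    (ae_of_all _ fun τ => by ring)
  simpa using g.norm_le_seminorm ℝ τ

end SchwartzMap

lemma integral_jap_rpow_mul_norm_sq_comp_sub_le {E : Type*} [NormedAddCommGroup E] {s : ℝ}
    (hs : 0 ≤ s) {g : ℝ → E} (hg : Integrable (fun τ : ℝ => jap τ ^ s * ‖g τ‖ ^ 2)) (c : ℝ) :
    ∫ τ, jap τ ^ s * ‖g (τ - c)‖ ^ 2 ≤ jap c ^ s * ∫ τ, jap τ ^ s * ‖g τ‖ ^ 2 := by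
  rw [← integral_sub_right_eq_self (fun τ => jap τ ^ s * ‖g τ‖ ^ 2) c, ← integral_const_mul]
  refine integral_mono_of_nonneg (ae_of_all _ fun τ => ?_)
    ((hg.comp_sub_right c).const_mul _) (ae_of_all _ fun τ => ?_)
  · have := jap_pos τ
    positivity
  · have := jap_pos c
    calc jap τ ^ s * ‖g (τ - c)‖ ^ 2 = jap (τ - c + c) ^ s * ‖g (τ - c)‖ ^ 2 := by
          rw [sub_add_cancel]
      _ ≤ jap (τ - c) ^ s * jap c ^ s * ‖g (τ - c)‖ ^ 2 := by
          gcongr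
          exact jap_rpow_add_le hs _ _
      _ = jap c ^ s * (jap (τ - c) ^ s * ‖g (τ - c)‖ ^ 2) := by ring

lemma integral_jap_sub_rpow_mul_norm_mul_sq_le {𝕜 : Type*} [NormedDivisionRing 𝕜] {s : ℝ}
    (hs : 0 ≤ s) {g : ℝ → 𝕜} (hg : Integrable (fun τ : ℝ => jap τ ^ s * ‖g τ‖ ^ 2))
    (z : 𝕜) (c d : ℝ) :
    ∫ τ, jap (τ - d) ^ s * ‖z * g (τ - c - d)‖ ^ 2 ≤
      jap c ^ s * (∫ τ, jap τ ^ s * ‖g τ‖ ^ 2) * ‖z‖ ^ 2 :=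
  calc _ = ‖z‖ ^ 2 * ∫ τ, jap τ ^ s * ‖g (τ - c)‖ ^ 2 := by
        rw [← integral_const_mul, ← integral_sub_right_eq_self
          (fun τ => ‖z‖ ^ 2 * (jap τ ^ s * ‖g (τ - c)‖ ^ 2)) d]
        congr 1 with τ
        rw [sub_right_comm, norm_mul, mul_pow]
        ring
    _ ≤ ‖z‖ ^ 2 * (jap c ^ s * ∫ τ, jap τ ^ s * ‖g τ‖ ^ 2) := by
        gcongr
        exact integral_jap_rpow_mul_norm_sq_comp_sub_le hs hg c
    _ = jap c ^ s * (∫ τ, jap τ ^ s * ‖g τ‖ ^ 2) * ‖z‖ ^ 2 := by ring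

lemma tsum_le_mul_tsum_of_nonneg_of_le {ι : Type*} {F u : ι → ℝ} {K : ℝ}
    (hF : ∀ i, 0 ≤ F i) (hFu : ∀ i, F i ≤ K * u i) (hu : Summable u) :
    ∑' i, F i ≤ K * ∑' i, u i := by
  rw [← tsum_mul_left]
  exact ((hu.mul_left K).of_nonneg_of_le hF hFu).tsum_le_tsum hFu (hu.mul_left K)

lemma Hnorm_zero (f : ℤ → ℂ) : Hnorm 0 f = Real.sqrt (∑' ξ : ℤ, ‖f ξ‖ ^ 2) := by
  simp only [Hnorm, mul_zero, Real.rpow_zero, one_mul]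

theorem cutoff_resonant_solution_in_Xb
    (b : ℝ) (hb : 0 ≤ b) :
    ∃ C : ℝ, 0 < C ∧ ∀ (η : SchwartzMap ℝ ℂ) (a : ℤ → ℝ) (A : ℝ) (f : ℤ → ℂ),
      (∀ ξ : ℤ, |a ξ| ≤ A) → f 0 = 0 →
      Summable (fun ξ : ℤ => ‖f ξ‖ ^ 2) →
      Real.sqrt (∑' ξ : ℤ, ∫ τ : ℝ,
          jap (τ - (ξ : ℝ) ^ 3) ^ (2 * b) *
            ‖f ξ * FourierTransform.fourier (fun x : ℝ => η x) (τ - a ξ - (ξ : ℝ) ^ 3)‖ ^ 2) ≤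
        C * Real.sqrt (∫ τ : ℝ,
            jap τ ^ (2 * b) * ‖FourierTransform.fourier (fun x : ℝ => η x) τ‖ ^ 2) *
          (1 + A) ^ b * Hnorm 0 f := by
  refine ⟨1, one_pos, fun η a A f hA _ hf => ?_⟩
  set g : ℝ → ℂ := FourierTransform.fourier (fun x : ℝ => η x)
  set I := ∫ τ : ℝ, jap τ ^ (2 * b) * ‖g τ‖ ^ 2
  have hg : Integrable (fun τ : ℝ => jap τ ^ (2 * b) * ‖g τ‖ ^ 2) :=
    (SchwartzMap.fourierTransformCLM ℂ η).integrable_jap_rpow_mul_norm_sq _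
  have hI : 0 ≤ I := integral_nonneg fun τ => by have := jap_pos τ; positivity
  have hA1 : 0 < 1 + A := by linarith [abs_nonneg (a 0), hA 0]
  have hfreq (ξ : ℤ) : ∫ τ : ℝ, jap (τ - (ξ : ℝ) ^ 3) ^ (2 * b) *
      ‖f ξ * g (τ - a ξ - (ξ : ℝ) ^ 3)‖ ^ 2 ≤ (1 + A) ^ (2 * b) * I * ‖f ξ‖ ^ 2 := by
    have := jap_pos (a ξ)
    have hjap : jap (a ξ) ≤ 1 + A := (add_le_add_iff_left 1).2 (hA ξ)
    refine (integral_jap_sub_rpow_mul_norm_mul_sq_le (by positivity) hg (f ξ) (a ξ) _).trans ?_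
    gcongr
  have hsum := tsum_le_mul_tsum_of_nonneg_of_le
    (fun ξ => integral_nonneg fun τ => by have := jap_pos (τ - (ξ : ℝ) ^ 3); positivity) hfreq hf
  calc _ ≤ Real.sqrt ((1 + A) ^ (2 * b) * I * ∑' ξ : ℤ, ‖f ξ‖ ^ 2) := Real.sqrt_le_sqrt hsum
    _ = (1 + A) ^ b * Real.sqrt I * Hnorm 0 f := by
        rw [Hnorm_zero, Real.sqrt_mul (by positivity), Real.sqrt_mul (by positivity),
          mul_comm 2 b, Real.rpow_mul hA1.le, Real.rpow_two, Real.sqrt_sq (by positivity)]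
    _ = 1 * Real.sqrt I * (1 + A) ^ b * Hnorm 0 f := by ring
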